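/- arXiv:1610.07302 — 2 statements merged into one kernel-verified Lean document; each statement's English description precedes it below -/
import Mathlib

section
/- Let a, b be positive real numbers and let f : ℝ → ℝ be defined by f(x) = (b·sinh(a·x))/(a·sinh(b·x)) for x ≠ 0 and f(0) = 1 (the continuous extension). Then the following are equivalent: (1) a ≤ b; (2) f is positive definite; (3) f is infinitely divisible. -/
open scoped ComplexOrder

/-- A function `φ : ℝ → ℂ` is positive definite if for every `n`, all real numbers
`x 1, …, x n` and complex numbers `c 1, …, c n`, the sum
`∑ i j, c i * conj (c j) * φ (x i - x j)` is a nonnegative real number. -/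
def IsPosDefFun (φ : ℝ → ℂ) : Prop :=
  ∀ (n : ℕ) (x : Fin n → ℝ) (c : Fin n → ℂ),
    0 ≤ ∑ i, ∑ j, c i * (starRingEnd ℂ) (c j) * φ (x i - x j)

/-- A real-valued function is infinitely divisible if every positive real power of it
is positive definite. -/
def IsInfDivFun (φ : ℝ → ℝ) : Prop :=
  ∀ r : ℝ, 0 < r → IsPosDefFun fun x => ((φ x ^ r : ℝ) : ℂ)

/-!
Euler's product `sinh y = y ∏ₖ (1 + (y / (π k))²)` makes `f` the pointwise limit of the products
`∏ₖ F (x / (π k))`, where `F x = (1 + (a x)²) / (1 + (b x)²)`; so for `a ≤ b` it suffices that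
every `F ^ r` is positive definite. Differentiating in the parameter gives
`log F x = 2 log (a / b) + ∫ v in a..b, 2 / (v (1 + (v x)²))`, and `1 / (1 + x²)` is positive
definite, being `∫₀^∞ e^{-t} cos (t x) dt`. Positive definite functions are closed under sums,
nonnegative multiples, pointwise limits and (by the Schur product theorem) products, hence under
`exp`, so `F x ^ r = (a / b) ^ (2 r) * exp (r ∫ v in a..b, …)` is positive definite.

Conversely a positive definite `φ` has `Re φ x ≤ Re φ 0`, whereas `f 1 > 1 = f 0` when `b < a`,
since `sinh y / y = ∑ y^{2n} / (2n+1)!` is increasing on `(0, ∞)`.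
-/

open Complex Real MeasureTheory Filter Set Topology ComplexConjugate

namespace IsPosDefFun

variable {φ ψ : ℝ → ℂ}

theorem apply_zero_nonneg (hφ : IsPosDefFun φ) : 0 ≤ φ 0 := by
  simpa using hφ 1 ![0] ![1]

theorem apply_neg (hφ : IsPosDefFun φ) (x : ℝ) : φ (-x) = conj (φ x) := by
  have h1 := hφ 2 ![x, 0] ![1, 1]
  have hI := hφ 2 ![x, 0] ![1, I]
  have h0 := hφ.apply_zero_nonneg
  simp only [Fin.sum_univ_two, Matrix.cons_val_zero, Matrix.cons_val_one, Matrix.cons_val_fin_one,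
    map_one, conj_I, sub_self, sub_zero, zero_sub, mul_one, one_mul, mul_neg, neg_mul, I_mul_I,
    neg_neg] at h1 hI
  rw [Complex.nonneg_iff] at h1 hI h0
  apply Complex.ext <;>
    simp only [add_re, add_im, neg_re, neg_im, mul_re, mul_im, I_re, I_im, conj_re, conj_im,
      zero_mul, one_mul, zero_sub, zero_add, neg_neg] at h1 hI h0 ⊢ <;> linarith

theorem _root_.isPosDefFun_iff_posSemidef :
    IsPosDefFun φ ↔ ∀ n (x : Fin n → ℝ), (Matrix.of fun i j => φ (x i - x j)).PosSemidef := by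
  refine ⟨fun hφ n x => .of_dotProduct_mulVec_nonneg ?_ fun v => ?_, fun h n x c => ?_⟩
  · ext i j
    simp [hφ.apply_neg (x j - x i) |>.symm]
  · convert hφ n x (star v) using 1
    simp [dotProduct, Matrix.mulVec, Finset.mul_sum, mul_comm, mul_left_comm, mul_assoc]
  · convert (h n x).dotProduct_mulVec_nonneg (star c) using 1
    simp [dotProduct, Matrix.mulVec, Finset.mul_sum, mul_comm, mul_left_comm]

theorem mul (hφ : IsPosDefFun φ) (hψ : IsPosDefFun ψ) : IsPosDefFun fun x => φ x * ψ x :=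
  isPosDefFun_iff_posSemidef.2 fun n x =>
    (isPosDefFun_iff_posSemidef.1 hφ n x).hadamard (isPosDefFun_iff_posSemidef.1 hψ n x)

theorem const {c : ℂ} (hc : 0 ≤ c) : IsPosDefFun fun _ => c := by
  intro n x v
  have : ∑ i, ∑ j, v i * conj (v j) * c = (∑ i, v i) * star (∑ i, v i) * c := by
    simp only [star_sum, RCLike.star_def, Finset.mul_sum, Finset.sum_mul]
    exact Finset.sum_comm
  rw [this]
  exact mul_nonneg (mul_star_self_nonneg _) hc

theorem const_mul (hφ : IsPosDefFun φ) {c : ℂ} (hc : 0 ≤ c) : IsPosDefFun fun x => c * φ x :=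
  (const hc).mul hφ

theorem add (hφ : IsPosDefFun φ) (hψ : IsPosDefFun ψ) : IsPosDefFun fun x => φ x + ψ x := by
  intro n x c
  simpa [mul_add, Finset.sum_add_distrib] using add_nonneg (hφ n x c) (hψ n x c)

theorem sum {ι : Type*} (s : Finset ι) {F : ι → ℝ → ℂ} (h : ∀ i ∈ s, IsPosDefFun (F i)) :
    IsPosDefFun fun x => ∑ i ∈ s, F i x := by
  classical
  induction s using Finset.induction_on with
  | empty => simpa using const le_rfl
  | insert i s hi ih =>
    simp_rw [Finset.sum_insert hi]
    exact (h i (s.mem_insert_self i)).add (ih fun j hj => h j (Finset.mem_insert_of_mem hj))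

theorem prod {ι : Type*} (s : Finset ι) {F : ι → ℝ → ℂ} (h : ∀ i ∈ s, IsPosDefFun (F i)) :
    IsPosDefFun fun x => ∏ i ∈ s, F i x := by
  classical
  induction s using Finset.induction_on with
  | empty => simpa using const zero_le_one
  | insert i s hi ih =>
    simp_rw [Finset.prod_insert hi]
    exact (h i (s.mem_insert_self i)).mul (ih fun j hj => h j (Finset.mem_insert_of_mem hj))

theorem pow (hφ : IsPosDefFun φ) (m : ℕ) : IsPosDefFun fun x => φ x ^ m := by
  simpa using prod (Finset.range m) fun _ _ => hφ

theorem of_tendsto {F : ℕ → ℝ → ℂ} (hF : ∀ N, IsPosDefFun (F N))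
    (hlim : ∀ x, Tendsto (fun N => F N x) atTop (𝓝 (φ x))) : IsPosDefFun φ := fun n x c =>
  ge_of_tendsto' (tendsto_finsetSum _ fun i _ => tendsto_finsetSum _ fun j _ =>
    (hlim (x i - x j)).const_mul _) fun N => hF N n x c

theorem exp (hφ : IsPosDefFun φ) : IsPosDefFun fun x => Complex.exp (φ x) := by
  refine of_tendsto (fun N => sum (Finset.range N) fun m _ =>
    (hφ.pow m).const_mul (c := (m.factorial : ℂ)⁻¹) (inv_nonneg.2 (Nat.cast_nonneg _))) fun x => ?_
  have := NormedSpace.expSeries_div_hasSum_exp (φ x)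
  rw [← Complex.exp_eq_exp_ℂ] at this
  simpa [div_eq_inv_mul] using this.tendsto_sum_nat

theorem integral {α : Type*} [MeasurableSpace α] {μ : Measure α} {F : α → ℝ → ℂ}
    (hF : ∀ᵐ t ∂μ, IsPosDefFun (F t)) (hint : ∀ x, Integrable (fun t => F t x) μ) :
    IsPosDefFun fun x => ∫ t, F t x ∂μ := by
  intro n x c
  have : ∑ i, ∑ j, c i * conj (c j) * ∫ t, F t (x i - x j) ∂μ
      = ∫ t, ∑ i, ∑ j, c i * conj (c j) * F t (x i - x j) ∂μ := by
    rw [integral_finsetSum _ fun i _ => integrable_finsetSum _ fun j _ => (hint _).const_mul _]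
    simp_rw [integral_finsetSum _ fun j _ => (hint _).const_mul _, integral_const_mul]
  rw [this]
  exact integral_nonneg_of_ae (hF.mono fun t ht => ht n x c)

theorem comp_mul (hφ : IsPosDefFun φ) (a : ℝ) : IsPosDefFun fun x => φ (a * x) := by
  intro n x c
  simpa [mul_sub] using hφ n (fun i => a * x i) c

theorem re_le (hφ : IsPosDefFun φ) (x : ℝ) : (φ x).re ≤ (φ 0).re := by
  have h := hφ 2 ![0, x] ![1, -1]
  simp only [Fin.sum_univ_two, Matrix.cons_val_zero, Matrix.cons_val_one, Matrix.cons_val_fin_one,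
    map_one, map_neg, sub_self, sub_zero, zero_sub, mul_one, one_mul, mul_neg, neg_mul, neg_neg,
    hφ.apply_neg] at h
  have h' := (Complex.nonneg_iff.1 h).1
  simp only [add_re, neg_re, conj_re] at h'
  linarith

end IsPosDefFun

theorem isPosDefFun_exp_mul_I (t : ℝ) : IsPosDefFun fun x => cexp (t * x * I) := by
  intro n x c
  have hterm : ∀ i j, c i * conj (c j) * cexp (t * ↑(x i - x j) * I)
      = c i * cexp (t * x i * I) * star (c j * cexp (t * x j * I)) := by
    intro i j
    simp only [star_mul', RCLike.star_def, ← Complex.exp_conj, map_mul, Complex.conj_ofReal,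
      Complex.conj_I]
    rw [mul_mul_mul_comm, ← Complex.exp_add]
    push_cast
    ring_nf
  simp_rw [hterm, ← Finset.mul_sum, ← Finset.sum_mul, ← star_sum]
  exact mul_star_self_nonneg _

theorem isPosDefFun_cos (t : ℝ) : IsPosDefFun fun x => (Real.cos (t * x) : ℂ) := by
  have h := ((isPosDefFun_exp_mul_I t).add (isPosDefFun_exp_mul_I (-t))).const_mul
    (c := 2⁻¹) (by positivity)
  convert h using 2 with x
  push_cast
  rw [Complex.cos]
  ring_nf

theorem isPosDefFun_inv_one_add_sq : IsPosDefFun fun x => (((1 + x ^ 2)⁻¹ : ℝ) : ℂ) := by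
  have hre : ∀ x : ℝ, (-1 + x * I).re < 0 := by simp
  have hexp : ∀ x t : ℝ, RCLike.re (cexp ((-1 + x * I) * t)) = Real.exp (-t) * Real.cos (t * x) := by
    intro x t
    rw [RCLike.re_to_complex, Complex.exp_re]
    simp [mul_comm]
  have hint : ∀ x : ℝ, IntegrableOn (fun t : ℝ => Real.exp (-t) * Real.cos (t * x)) (Ioi 0) :=
    fun x => by
      have := (integrableOn_exp_mul_complex_Ioi (hre x) 0).re
      simp only [hexp] at this
      exact this
  have hval : ∀ x : ℝ, ∫ t in Ioi (0 : ℝ), Real.exp (-t) * Real.cos (t * x) = (1 + x ^ 2)⁻¹ := by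
    intro x
    simp_rw [← hexp]
    rw [integral_re (integrableOn_exp_mul_complex_Ioi (hre x) 0),
      integral_exp_mul_complex_Ioi (hre x) 0]
    simp only [ofReal_zero, mul_zero, Complex.exp_zero, RCLike.re_to_complex, div_re, neg_re,
      one_re, add_re, mul_re, ofReal_re, I_re, ofReal_im, I_im, normSq_apply, add_im, neg_im, one_im,
      mul_im]
    field_simp
    ring
  have hpd : ∀ t : ℝ, IsPosDefFun fun x => ((Real.exp (-t) * Real.cos (t * x) : ℝ) : ℂ) := by
    intro t
    simpa only [Complex.ofReal_mul] using (isPosDefFun_cos t).const_mul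
      (c := (Real.exp (-t) : ℂ)) (by exact_mod_cast (Real.exp_pos _).le)
  have := IsPosDefFun.integral (μ := volume.restrict (Ioi 0)) (ae_of_all _ hpd)
    fun x => (hint x).ofReal
  simpa only [integral_complex_ofReal, hval] using this

theorem log_one_add_sq_sub_log_one_add_sq {a b : ℝ} (ha : 0 < a) (hb : 0 < b) (x : ℝ) :
    Real.log (1 + (a * x) ^ 2) - Real.log (1 + (b * x) ^ 2)
      = 2 * Real.log (a / b) + ∫ v in a..b, 2 / v * (1 + (v * x) ^ 2)⁻¹ := by
  have hpos : ∀ v ∈ uIcc a b, 0 < v := fun v hv => lt_min ha hb |>.trans_le hv.1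
  have hderiv : ∀ v ∈ uIcc a b, HasDerivAt (fun v => 2 * Real.log v - Real.log (1 + (v * x) ^ 2))
      (2 / v * (1 + (v * x) ^ 2)⁻¹) v := by
    intro v hv
    have hv0 := (hpos v hv).ne'
    have h1 : 1 + (v * x) ^ 2 ≠ 0 := by positivity
    refine (((Real.hasDerivAt_log hv0).const_mul 2).sub
      (((((hasDerivAt_id v).mul_const x).pow 2).const_add 1).log h1)).congr_deriv ?_
    simp only [id, Pi.pow_apply]
    field_simp
    ring
  have hcont : ContinuousOn (fun v => 2 / v * (1 + (v * x) ^ 2)⁻¹) (uIcc a b) :=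
    fun v hv => by
      have := (hpos v hv).ne'
      fun_prop (disch := positivity)
  rw [intervalIntegral.integral_eq_sub_of_hasDerivAt hderiv hcont.intervalIntegrable,
    Real.log_div ha.ne' hb.ne']
  ring

theorem isPosDefFun_rpow_one_add_sq_div {a b r : ℝ} (ha : 0 < a) (hab : a ≤ b) (hr : 0 ≤ r) :
    IsPosDefFun fun x => ((((1 + (a * x) ^ 2) / (1 + (b * x) ^ 2)) ^ r : ℝ) : ℂ) := by
  have hlog : IsPosDefFun fun x => ((∫ v in a..b, 2 / v * (1 + (v * x) ^ 2)⁻¹ : ℝ) : ℂ) := by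
    simp_rw [intervalIntegral.integral_of_le hab, ← integral_complex_ofReal]
    refine IsPosDefFun.integral (ae_restrict_of_forall_mem measurableSet_Ioc fun v hv => ?_)
      fun x => ?_
    · have hv : 0 < v := ha.trans hv.1
      simpa only [Complex.ofReal_mul] using (isPosDefFun_inv_one_add_sq.comp_mul v).const_mul
        (c := ((2 / v : ℝ) : ℂ)) (by exact_mod_cast (by positivity : (0 : ℝ) ≤ 2 / v))
    · refine Integrable.ofReal ?_
      have : ContinuousOn (fun v => 2 / v * (1 + (v * x) ^ 2)⁻¹) (Icc a b) :=
        fun v hv => by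
          have := (ha.trans_le hv.1).ne'
          fun_prop (disch := positivity)
      exact (this.integrableOn_Icc).mono_set Ioc_subset_Icc_self
  have hexp := ((hlog.const_mul (c := r) (by exact_mod_cast hr)).exp).const_mul
    (c := ((Real.exp (2 * r * Real.log (a / b)) : ℝ) : ℂ)) (by exact_mod_cast (Real.exp_pos _).le)
  convert hexp using 2 with x
  rw [Real.rpow_def_of_pos (by positivity), Real.log_div (by positivity) (by positivity),
    log_one_add_sq_sub_log_one_add_sq ha (ha.trans_le hab)]
  simp only [Complex.ofReal_exp]
  rw [← Complex.exp_add]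
  congr 1
  push_cast
  ring

theorem Real.tendsto_euler_sinh_prod (y : ℝ) :
    Tendsto (fun N : ℕ => y * ∏ k ∈ Finset.range N, (1 + (y / (π * (k + 1))) ^ 2)) atTop
      (𝓝 (sinh y)) := by
  have h := (Complex.tendsto_euler_sin_prod (y / π * I)).mul_const (-I)
  have hπ : (π : ℂ) ≠ 0 := Complex.ofReal_ne_zero.2 pi_ne_zero
  have hsin : Complex.sin (π * (y / π * I)) * -I = sinh y := by
    rw [← mul_assoc, mul_div_cancel₀ _ hπ, Complex.sin_mul_I, Complex.ofReal_sinh]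
    ring_nf
    simp
  rw [hsin] at h
  refine (Complex.continuous_re.tendsto _).comp h |>.congr fun N => ?_
  have hfac : ∀ k : ℕ, (1 : ℂ) - (y / π * I) ^ 2 / (k + 1) ^ 2
      = ((1 + (y / (π * (k + 1))) ^ 2 : ℝ) : ℂ) := by
    intro k
    push_cast
    rw [mul_pow, I_sq]
    field_simp
    ring
  rw [Function.comp_apply, Finset.prod_congr rfl fun k _ => hfac k, ← Complex.ofReal_prod,
    ← mul_assoc, mul_div_cancel₀ _ hπ]
  set P := ∏ k ∈ Finset.range N, (1 + (y / (π * (k + 1))) ^ 2)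
  rw [show (y : ℂ) * I * P * -I = ((y * P : ℝ) : ℂ) by
    push_cast; linear_combination (-(y : ℂ) * P) * I_sq, Complex.ofReal_re]

theorem tendsto_prod_sinh_quotient {a b x : ℝ} (ha : 0 < a) (hb : 0 < b) (hx : x ≠ 0) :
    Tendsto (fun N : ℕ => ∏ k ∈ Finset.range N,
      (1 + (a * (x / (π * (k + 1)))) ^ 2) / (1 + (b * (x / (π * (k + 1)))) ^ 2)) atTop
      (𝓝 (b * Real.sinh (a * x) / (a * Real.sinh (b * x)))) := by
  have hsinh : Real.sinh (b * x) ≠ 0 := Real.sinh_ne_zero.2 (mul_ne_zero hb.ne' hx)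
  have h := ((Real.tendsto_euler_sinh_prod (a * x)).div (Real.tendsto_euler_sinh_prod (b * x))
    hsinh).const_mul (b / a)
  convert h using 1
  · ext N
    rw [Finset.prod_div_distrib, Pi.div_apply]
    simp only [mul_div_assoc]
    field_simp
  · field_simp

theorem mul_sinh_lt_mul_sinh {a b : ℝ} (hb : 0 < b) (hba : b < a) :
    a * Real.sinh b < b * Real.sinh a := by
  have ha := hb.trans hba
  refine hasSum_lt (i := 1) (fun n => ?_) ?_ ((Real.hasSum_sinh b).mul_left a)
    ((Real.hasSum_sinh a).mul_left b)
  · simp only [mul_div_assoc']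
    gcongr ?_ / _
    calc a * b ^ (2 * n + 1) = a * b * (b ^ 2) ^ n := by ring
      _ ≤ a * b * (a ^ 2) ^ n := by gcongr
      _ = b * a ^ (2 * n + 1) := by ring
  · norm_num [Nat.factorial]
    nlinarith [mul_pos (mul_pos ha hb) (mul_pos (sub_pos.2 hba) (add_pos ha hb))]

theorem isPosDefFun_rpow_sinh_quotient {a b r : ℝ} (ha : 0 < a) (hab : a ≤ b) (hr : 0 ≤ r)
    {f : ℝ → ℝ} (hf : ∀ x ≠ 0, f x = b * Real.sinh (a * x) / (a * Real.sinh (b * x)))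
    (hf0 : f 0 = 1) : IsPosDefFun fun x => ((f x ^ r : ℝ) : ℂ) := by
  let q (k : ℕ) (x : ℝ) : ℝ :=
    (1 + (a * (x / (π * (k + 1)))) ^ 2) / (1 + (b * (x / (π * (k + 1)))) ^ 2)
  have hq : ∀ x, Tendsto (fun N => ∏ k ∈ Finset.range N, q k x) atTop (𝓝 (f x)) := by
    intro x
    rcases eq_or_ne x 0 with rfl | hx
    · simp [q, hf0]
    · rw [hf x hx]
      exact tendsto_prod_sinh_quotient ha (ha.trans_le hab) hx
  refine IsPosDefFun.of_tendsto (F := fun N x => ∏ k ∈ Finset.range N, ((q k x ^ r : ℝ) : ℂ))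
    (fun N => IsPosDefFun.prod _ fun k _ => ?_) fun x => ?_
  · simpa only [inv_mul_eq_div] using
      (isPosDefFun_rpow_one_add_sq_div ha hab hr).comp_mul (π * (k + 1))⁻¹
  · rw [← funext fun N => Complex.ofReal_prod (Finset.range N) _]
    have hq0 : ∀ k, 0 ≤ q k x := fun k => by positivity
    simp_rw [Real.finsetProd_rpow _ _ fun k _ => hq0 k]
    exact (Complex.continuous_ofReal.tendsto _).comp
      ((Real.continuousAt_rpow_const _ r (Or.inr hr)).tendsto.comp (hq x))

theorem sinh_quotient_posdef_iff (a b : ℝ) (ha : 0 < a) (hb : 0 < b)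
    (f : ℝ → ℝ)
    (hf : ∀ x : ℝ, x ≠ 0 → f x = b * Real.sinh (a * x) / (a * Real.sinh (b * x)))
    (hf0 : f 0 = 1) :
    (a ≤ b ↔ IsPosDefFun fun x => (f x : ℂ)) ∧ (a ≤ b ↔ IsInfDivFun f) := by
  have hdiv : a ≤ b → IsInfDivFun f := fun hab r hr =>
    isPosDefFun_rpow_sinh_quotient ha hab hr.le hf hf0
  have hpd : IsInfDivFun f → IsPosDefFun fun x => (f x : ℂ) := fun h => by
    simpa using h 1 one_pos
  have hle : (IsPosDefFun fun x => (f x : ℂ)) → a ≤ b := by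
    intro h
    by_contra! hba
    have h1 := h.re_le 1
    rw [Complex.ofReal_re, Complex.ofReal_re, hf0, hf 1 one_ne_zero, mul_one, mul_one,
      div_le_one (mul_pos ha (Real.sinh_pos_iff.2 hb))] at h1
    exact h1.not_gt (mul_sinh_lt_mul_sinh hb hba)
  exact ⟨⟨hpd ∘ hdiv, hle⟩, ⟨hdiv, hle ∘ hpd⟩⟩
end

section
/- The function f : ℝ → ℝ defined by f(x) = (sinh(8x)·sinh(6x)·sinh(3x))/(sinh(9x)·sinh(4x)·sinh(4x)) for x ≠ 0 and f(0) = 1 (its continuous extension) is not positive definite. -/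
open scoped ComplexOrder

/-!
Testing a real positive definite `f` against the coefficients `(1, 1, -1, -1)` at the points
`0, s, T, T + s` gives `2 f(T) + f(T + s) + f(T - s) ≤ 2 f(0) + 2 f(s)`. If `f(T) → f(0)` as
`T → ∞`, letting `T → ∞` forces `f(0) ≤ f(s)` for every `s`. Here `f(T) → 1 = f(0)` because the
frequencies balance (`8 + 6 + 3 = 9 + 4 + 4`), whereas
`f(log 2) = (2¹⁶ - 1)(2¹² - 1)(2⁶ - 1) / ((2¹⁸ - 1)(2⁸ - 1)²) < 1`.
-/

open Filter Topology Real

namespace IsPosDefFun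

variable {f : ℝ → ℝ}

theorem sum_real_nonneg (hf : IsPosDefFun fun x => (f x : ℂ)) {n : ℕ} (x : Fin n → ℝ)
    (c : Fin n → ℝ) : 0 ≤ ∑ i, ∑ j, c i * c j * f (x i - x j) := by
  have h := hf n x fun i => c i
  simp only [Complex.conj_ofReal] at h
  exact_mod_cast h

theorem four_point (hf : IsPosDefFun fun x => (f x : ℂ)) (heven : Function.Even f)
    (a b c d : ℝ) :
    f (c - a) + f (d - a) + f (c - b) + f (d - b) ≤ 2 * f 0 + f (b - a) + f (d - c) := by
  have h := hf.sum_real_nonneg ![a, b, c, d] ![1, 1, -1, -1]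
  simp only [Fin.sum_univ_four, Matrix.cons_val_zero, Matrix.cons_val_one, Matrix.cons_val_two,
    Matrix.cons_val_three, Matrix.head_cons, Matrix.tail_cons, sub_self] at h
  have hswap : ∀ x y, f (x - y) = f (y - x) := fun x y => by rw [← heven, neg_sub]
  rw [hswap a b, hswap a c, hswap a d, hswap b c, hswap b d, hswap c d] at h
  linarith

theorem le_of_tendsto_atTop (hf : IsPosDefFun fun x => (f x : ℂ)) (heven : Function.Even f)
    (hlim : Tendsto f atTop (𝓝 (f 0))) (s : ℝ) : f 0 ≤ f s := by
  have hT : Tendsto (fun T => f T + f (T + s) + f (T - s) + f (T + s - s)) atTop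
      (𝓝 (f 0 + f 0 + f 0 + f 0)) := by
    have hplus := hlim.comp (tendsto_atTop_add_const_right atTop s tendsto_id)
    have hminus := hlim.comp (tendsto_atTop_add_const_right atTop (-s) tendsto_id)
    simp only [Function.comp_def, id, ← sub_eq_add_neg] at hplus hminus
    simp only [add_sub_cancel_right]
    exact ((hlim.add hplus).add hminus).add hlim
  have hle : ∀ T, f T + f (T + s) + f (T - s) + f (T + s - s) ≤ 2 * f 0 + f s + f s := by
    intro T
    simpa using hf.four_point heven 0 s T (T + s)
  linarith [le_of_tendsto' hT hle]

end IsPosDefFun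

theorem sinh_div_exp (x : ℝ) : sinh x / exp x = (1 - exp (-(2 * x))) / 2 := by
  rw [sinh_eq, div_right_comm, sub_div, div_self (exp_ne_zero x), ← exp_sub]
  ring_nf

theorem tendsto_sinh_div_exp_atTop : Tendsto (fun x => sinh x / exp x) atTop (𝓝 (1 / 2)) := by
  simp only [sinh_div_exp]
  have h : Tendsto (fun x : ℝ => exp (-(2 * x))) atTop (𝓝 0) :=
    tendsto_exp_neg_atTop_nhds_zero.comp (tendsto_id.const_mul_atTop two_pos)
  simpa using (h.const_sub 1).div_const 2

noncomputable def sinhRatio (x : ℝ) : ℝ :=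
  sinh (8 * x) * sinh (6 * x) * sinh (3 * x) / (sinh (9 * x) * sinh (4 * x) * sinh (4 * x))

theorem sinhRatio_neg (x : ℝ) : sinhRatio (-x) = sinhRatio x := by
  simp only [sinhRatio, mul_neg, sinh_neg, neg_mul, neg_neg, neg_div_neg_eq]

theorem sinhRatio_eq_div_exp (x : ℝ) :
    sinhRatio x =
      sinh (8 * x) / exp (8 * x) * (sinh (6 * x) / exp (6 * x)) * (sinh (3 * x) / exp (3 * x)) /
        (sinh (9 * x) / exp (9 * x) * (sinh (4 * x) / exp (4 * x)) *
          (sinh (4 * x) / exp (4 * x))) := by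
  have hexp : exp (8 * x) * exp (6 * x) * exp (3 * x) = exp (9 * x) * exp (4 * x) * exp (4 * x) := by
    simp only [← exp_add]
    ring_nf
  rw [sinhRatio, div_mul_div_comm, div_mul_div_comm, div_mul_div_comm, div_mul_div_comm, hexp,
    div_div_div_cancel_right₀ (by positivity)]

theorem tendsto_sinhRatio_atTop : Tendsto sinhRatio atTop (𝓝 1) := by
  have q : ∀ a : ℝ, 0 < a → Tendsto (fun x => sinh (a * x) / exp (a * x)) atTop (𝓝 (1 / 2)) :=
    fun a ha => tendsto_sinh_div_exp_atTop.comp (tendsto_id.const_mul_atTop ha)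
  have h := (((q 8 (by norm_num)).mul (q 6 (by norm_num))).mul (q 3 (by norm_num))).div
    (((q 9 (by norm_num)).mul (q 4 (by norm_num))).mul (q 4 (by norm_num))) (by norm_num)
  norm_num at h
  exact h.congr fun x => (sinhRatio_eq_div_exp x).symm

theorem sinhRatio_log_two_lt_one : sinhRatio (log 2) < 1 := by
  have hsinh : ∀ k : ℕ, sinh (k * log 2) = (2 ^ k - (2 ^ k)⁻¹) / 2 := fun k => by
    rw [← log_pow, sinh_log (by positivity)]
  rw [sinhRatio, show (8 : ℝ) = (8 : ℕ) by norm_num, show (6 : ℝ) = (6 : ℕ) by norm_num,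
    show (3 : ℝ) = (3 : ℕ) by norm_num, show (9 : ℝ) = (9 : ℕ) by norm_num,
    show (4 : ℝ) = (4 : ℕ) by norm_num]
  simp only [hsinh]
  norm_num

theorem sinh_863_944_not_posdef (f : ℝ → ℝ)
    (hf : ∀ x : ℝ, x ≠ 0 → f x =
      Real.sinh (8 * x) * Real.sinh (6 * x) * Real.sinh (3 * x) /
        (Real.sinh (9 * x) * Real.sinh (4 * x) * Real.sinh (4 * x)))
    (hf0 : f 0 = 1) :
    ¬ IsPosDefFun fun x => ((f x : ℝ) : ℂ) := by
  intro hpd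
  have hratio : ∀ x ≠ 0, f x = sinhRatio x := hf
  have heven : Function.Even f := fun x => by
    rcases eq_or_ne x 0 with rfl | hx
    · rw [neg_zero]
    · rw [hratio _ (neg_ne_zero.mpr hx), hratio x hx, sinhRatio_neg]
  have hlim : Tendsto f atTop (𝓝 (f 0)) := by
    rw [hf0]
    refine tendsto_sinhRatio_atTop.congr' ?_
    filter_upwards [eventually_ne_atTop 0] with x hx using (hratio x hx).symm
  have hmin := hpd.le_of_tendsto_atTop heven hlim (log 2)
  rw [hf0, hratio _ (log_pos one_lt_two).ne'] at hmin
  exact sinhRatio_log_two_lt_one.not_ge hmin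
end
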